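/- With the coefficients Ξ_k as defined in the context, ∑_{k=0}^{M} k·|Ξ_k| ≤ C·M/16, where C = 32·(1/3 + 1/π). -/

import Mathlib

/-!
Write `Ξ_k = [k = 0](β - α)/π - T(k) + [k + 2 ≤ M] T(k + 2)` with `T = selbergTerm`.
As `cot x ≤ 1/x` on `(0, π)`, `g ≤ 0`, so `|T(j)| ≤ 2 w(j)/(M + 1)` uniformly in `α, β`,
where `u = j/(M + 1)` and `w(j) = 1 - u - g(u) = (1 - u)(1 + cot πu) + 1/π` is `selbergWeight`.
The polynomial parts of `∑ k w(k)` and `∑ k w(k + 2)` are summed exactly. The cotangent parts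
are controlled by the reflection `j ↦ M + 1 - j`, which changes the sign of `cot πu`: it gives
`∑ j (1 - u) cot πu = 0` and `∑ (j - 2)(1 - u) cot πu = -∑ (1 - 2u) cot πu ≤ 0`.
-/

open Real

/-- `g(u) = -(1-u)·cot(πu) - 1/π` for `u < 1`, and `g(u) = 0` for `u ≥ 1`. -/
noncomputable def selbergG (u : ℝ) : ℝ :=
  if u < 1 then -(1 - u) * Real.cot (Real.pi * u) - 1 / Real.pi else 0

/-- The coefficients `Ξ_k`, `0 ≤ k ≤ M`, of the Beurling–Selberg minorant:
`Ξ_k = ((β-α)/π)·[k=0] - (1 - k/(M+1))·(cos kα + cos kβ)/(M+1)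
       - g(k/(M+1))·(sin kβ - sin kα)/(M+1)
       + (1 - (k+2)/(M+1))·(cos (k+2)α + cos (k+2)β)/(M+1)
       + g((k+2)/(M+1))·(sin (k+2)β - sin (k+2)α)/(M+1)`,
where for `k = 0` the term involving `g(k/(M+1))` is interpreted as `0`, and for
`k ∈ {M-1, M}` the last two terms are omitted. -/
noncomputable def selbergXi (α β : ℝ) (M k : ℕ) : ℝ :=
  (if k = 0 then (β - α) / Real.pi else 0)
    - (1 - (k : ℝ) / (M + 1)) * (Real.cos (k * α) + Real.cos (k * β)) / (M + 1)
    - (if k = 0 then 0 else selbergG ((k : ℝ) / (M + 1)))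
        * (Real.sin (k * β) - Real.sin (k * α)) / (M + 1)
    + (if k + 2 ≤ M then
        (1 - ((k : ℝ) + 2) / (M + 1)) * (Real.cos ((k + 2) * α) + Real.cos ((k + 2) * β)) / (M + 1)
          + selbergG (((k : ℝ) + 2) / (M + 1))
            * (Real.sin ((k + 2) * β) - Real.sin ((k + 2) * α)) / (M + 1)
      else 0)

open Finset

lemma Real.cot_pi_sub (x : ℝ) : cot (π - x) = -cot x := by
  rw [cot_eq_cos_div_sin, cot_eq_cos_div_sin, cos_pi_sub, sin_pi_sub, neg_div]

lemma Real.cot_le_inv {x : ℝ} (h0 : 0 < x) (hπ : x < π) : cot x ≤ x⁻¹ := by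
  have hsin : 0 < sin x := sin_pos_of_pos_of_lt_pi h0 hπ
  rw [cot_eq_cos_div_sin, div_le_iff₀ hsin, inv_mul_eq_div, le_div_iff₀ h0]
  rcases le_or_gt (cos x) 0 with hcos | hcos
  · nlinarith
  · have hx : x < π / 2 := by
      by_contra! hx
      linarith [cos_nonpos_of_pi_div_two_le_of_le hx (by linarith)]
    have htan := le_tan h0.le hx
    rw [tan_eq_sin_div_cos, le_div_iff₀ hcos] at htan
    linarith

lemma one_sub_two_mul_mul_cot_pi_mul_nonneg {u : ℝ} (h0 : 0 ≤ u) (h1 : u ≤ 1) :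
    0 ≤ (1 - 2 * u) * cot (π * u) := by
  have hπ := pi_pos
  rw [cot_eq_cos_div_sin, ← mul_div_assoc]
  refine div_nonneg ?_ (sin_nonneg_of_nonneg_of_le_pi (by positivity) (by nlinarith))
  rcases le_total u (1 / 2) with hu | hu
  · exact mul_nonneg (by linarith) (cos_nonneg_of_mem_Icc ⟨by nlinarith, by nlinarith⟩)
  · exact mul_nonneg_of_nonpos_of_nonpos (by linarith)
      (cos_nonpos_of_pi_div_two_le_of_le (by nlinarith) (by nlinarith))

lemma selbergG_nonpos {u : ℝ} (hu : 0 < u) : selbergG u ≤ 0 := by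
  unfold selbergG
  split_ifs with h1
  · have hv : 0 < 1 - u := by linarith
    have hcot : cot (π * u) = -cot (π * (1 - u)) := by rw [← cot_pi_sub]; ring_nf
    have hle := cot_le_inv (x := π * (1 - u)) (by positivity) (by nlinarith [pi_pos])
    have hinv : (1 - u) * (π * (1 - u))⁻¹ = 1 / π := by field_simp
    rw [hcot]
    nlinarith [mul_le_mul_of_nonneg_left hle hv.le]
  · rfl

-- Relies on the junk values `cot 0 = cot π = 0`: the reflection `j ↦ N - j` permutes
-- `range (N + 1)`, whose extra term `j = N` vanishes.
lemma sum_range_mul_cot_reflect (N : ℕ) (f : ℕ → ℝ) :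
    2 * ∑ j ∈ range N, f j * cot (π * (j / N)) =
      ∑ j ∈ range N, (f j - f (N - j)) * cot (π * (j / N)) := by
  rcases N.eq_zero_or_pos with rfl | hN
  · simp
  have hN' : (N : ℝ) ≠ 0 := by positivity
  have hcot : cot (π * (N / N)) = 0 := by
    rw [div_self hN', mul_one, cot_eq_cos_div_sin, sin_pi, div_zero]
  have hext : ∀ F : ℕ → ℝ, ∑ j ∈ range N, F j * cot (π * (j / N)) =
      ∑ j ∈ range (N + 1), F j * cot (π * (j / N)) := fun F => by
    rw [sum_range_succ, hcot, mul_zero, add_zero]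
  have hrefl : ∑ j ∈ range (N + 1), f (N - j) * cot (π * (j / N)) =
      -∑ j ∈ range (N + 1), f j * cot (π * (j / N)) := by
    rw [← sum_range_reflect, ← sum_neg_distrib]
    refine sum_congr rfl fun j hj => ?_
    have hjN : j ≤ N := Nat.lt_succ_iff.mp (mem_range.mp hj)
    rw [add_tsub_cancel_right, Nat.sub_sub_self hjN, Nat.cast_sub hjN,
      show π * ((N - j : ℝ) / N) = π - π * (j / N) by field_simp, cot_pi_sub]
    ring
  rw [hext, hext, sum_congr rfl fun j _ => sub_mul (f j) (f (N - j)) _, sum_sub_distrib, hrefl]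
  ring

lemma sum_range_mul_one_sub_div_mul_cot_eq_zero (N : ℕ) :
    ∑ j ∈ range N, j * (1 - j / N) * cot (π * (j / N)) = 0 := by
  have hrefl := sum_range_mul_cot_reflect N fun j => j * (1 - j / N)
  have hsymm :
      ∑ j ∈ range N, ((j : ℝ) * (1 - j / N) - (N - j : ℕ) * (1 - (N - j : ℕ) / N))
      * cot (π * (j / N)) = 0 := sum_eq_zero fun j hj => by
    have hjN : j < N := mem_range.mp hj
    have hN : (N : ℝ) ≠ 0 := Nat.cast_ne_zero.mpr (by omega)
    rw [Nat.cast_sub hjN.le]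
    field_simp
    ring
  linarith

lemma sum_range_sub_two_mul_one_sub_div_mul_cot_nonpos (N : ℕ) :
    ∑ j ∈ range N, (j - 2) * (1 - j / N) * cot (π * (j / N)) ≤ 0 := by
  have hrefl := sum_range_mul_cot_reflect N fun j => (j - 2) * (1 - j / N)
  have hterm : ∀ j ∈ range N,
      ((j - 2) * (1 - j / N) - ((N - j : ℕ) - 2) * (1 - (N - j : ℕ) / N))
      * cot (π * (j / N)) = -(2 * ((1 - 2 * (j / N)) * cot (π * (j / N)))) := fun j hj => by
    have hjN : j < N := mem_range.mp hj
    have hN : (N : ℝ) ≠ 0 := Nat.cast_ne_zero.mpr (by omega)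
    rw [Nat.cast_sub hjN.le]
    field_simp
    ring
  have hnonneg : ∀ j ∈ range N, 0 ≤ (1 - 2 * (j / N)) * cot (π * (j / N)) := fun j hj =>
    one_sub_two_mul_mul_cot_pi_mul_nonneg (by positivity)
      (div_le_one_of_le₀ (by exact_mod_cast (mem_range.mp hj).le) (by positivity))
  rw [sum_congr rfl hterm, sum_neg_distrib, ← mul_sum] at hrefl
  nlinarith [sum_nonneg hnonneg]

lemma sum_range_natCast (n : ℕ) : ∑ k ∈ range n, (k : ℝ) = n * (n - 1) / 2 := by
  induction n with
  | zero => simp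
  | succ n ih => rw [sum_range_succ, ih]; push_cast; ring

lemma sum_range_natCast_mul_sub (n : ℕ) (a : ℝ) :
    ∑ k ∈ range n, (k : ℝ) * (a - k) = n * (n - 1) * (3 * a - 2 * n + 1) / 6 := by
  induction n with
  | zero => simp
  | succ n ih => rw [sum_range_succ, ih]; push_cast; ring

lemma sum_range_natCast_mul_add_two (h : ℕ → ℝ) (n : ℕ) :
    ∑ k ∈ range n, k * h (k + 2) = ∑ j ∈ range (n + 2), (j - 2) * h j + h 1 + 2 * h 0 := by
  rw [sum_range_succ', sum_range_succ']
  push_cast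
  ring_nf

noncomputable def selbergTerm (α β : ℝ) (M : ℕ) (x : ℝ) : ℝ :=
  (1 - x / (M + 1)) * (cos (x * α) + cos (x * β)) / (M + 1)
    + selbergG (x / (M + 1)) * (sin (x * β) - sin (x * α)) / (M + 1)

noncomputable def selbergWeight (M : ℕ) (x : ℝ) : ℝ :=
  1 - x / (M + 1) - selbergG (x / (M + 1))

lemma selbergXi_eq (α β : ℝ) (M k : ℕ) :
    selbergXi α β M k = (if k = 0 then (β - α) / π else 0) - selbergTerm α β M k
      + if k + 2 ≤ M then selbergTerm α β M (k + 2) else 0 := by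
  rcases eq_or_ne k 0 with rfl | hk
  · simp [selbergXi, selbergTerm]
  · simp [selbergXi, selbergTerm, hk]
    ring

lemma abs_selbergTerm_le (α β : ℝ) {M : ℕ} {x : ℝ} (hx0 : 0 < x) (hxM : x ≤ M + 1) :
    |selbergTerm α β M x| ≤ 2 * selbergWeight M x / (M + 1) := by
  have hN : (0 : ℝ) < M + 1 := by positivity
  have h1 : 0 ≤ 1 - x / (M + 1) := sub_nonneg.mpr ((div_le_one hN).mpr hxM)
  have hg := selbergG_nonpos (div_pos hx0 hN)
  have hcos : |cos (x * α) + cos (x * β)| ≤ 2 :=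
    (abs_add_le _ _).trans (by linarith [abs_cos_le_one (x * α), abs_cos_le_one (x * β)])
  have hsin : |sin (x * β) - sin (x * α)| ≤ 2 :=
    (abs_sub _ _).trans (by linarith [abs_sin_le_one (x * α), abs_sin_le_one (x * β)])
  calc |selbergTerm α β M x|
      ≤ (1 - x / (M + 1)) * 2 / (M + 1) + -selbergG (x / (M + 1)) * 2 / (M + 1) := by
        refine (abs_add_le _ _).trans (add_le_add ?_ ?_)
        · rw [abs_div, abs_mul, abs_of_pos hN, abs_of_nonneg h1]
          gcongr
        · rw [abs_div, abs_mul, abs_of_pos hN, abs_of_nonpos hg]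
          gcongr
          linarith
    _ = 2 * selbergWeight M x / (M + 1) := by unfold selbergWeight; ring

lemma mul_abs_selbergXi_le (α β : ℝ) {M k : ℕ} (hk : k ≤ M) :
    k * |selbergXi α β M k| ≤
      2 / (M + 1) * (k * selbergWeight M k
        + if k + 2 ≤ M then k * selbergWeight M (k + 2) else 0) := by
  rcases eq_or_ne k 0 with rfl | hk0
  · simp
  have hkpos : (0 : ℝ) < k := by positivity
  have hkM : (k : ℝ) ≤ M := by exact_mod_cast hk
  have hshift : |if k + 2 ≤ M then selbergTerm α β M (k + 2) else 0| ≤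
      if k + 2 ≤ M then 2 * selbergWeight M (k + 2) / (M + 1) else 0 := by
    split_ifs with hk2
    · have hk2' : k + 2 ≤ M + 1 := by omega
      exact abs_selbergTerm_le α β (by positivity) (by exact_mod_cast hk2')
    · simp
  calc k * |selbergXi α β M k|
      ≤ k * (2 * selbergWeight M k / (M + 1)
          + if k + 2 ≤ M then 2 * selbergWeight M (k + 2) / (M + 1) else 0) := by
        rw [selbergXi_eq, if_neg hk0, zero_sub]
        gcongr
        refine (abs_add_le _ _).trans (add_le_add ?_ hshift)
        rw [abs_neg]
        exact abs_selbergTerm_le α β hkpos (by linarith)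
    _ = _ := by split_ifs <;> ring

lemma sum_mul_abs_selbergXi_le (α β : ℝ) (M : ℕ) :
    ∑ k ∈ range (M + 1), k * |selbergXi α β M k| ≤
      2 / (M + 1) * (∑ k ∈ range (M + 1), k * selbergWeight M k
        + ∑ k ∈ range (M - 1), k * selbergWeight M (k + 2)) := by
  have hfilter : (range (M + 1)).filter (· + 2 ≤ M) = range (M - 1) := by
    ext k
    simp only [mem_filter, mem_range]
    omega
  calc ∑ k ∈ range (M + 1), k * |selbergXi α β M k|
      ≤ ∑ k ∈ range (M + 1), 2 / (M + 1) * (k * selbergWeight M k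
          + if k + 2 ≤ M then k * selbergWeight M (k + 2) else 0) :=
        sum_le_sum fun k hk => mul_abs_selbergXi_le α β (Nat.lt_succ_iff.mp (mem_range.mp hk))
    _ = _ := by rw [← mul_sum, sum_add_distrib, ← sum_filter, hfilter]

lemma selbergWeight_eq {M : ℕ} {x : ℝ} (hx : x < M + 1) :
    selbergWeight M x =
      1 - x / (M + 1) + 1 / π + (1 - x / (M + 1)) * cot (π * (x / (M + 1))) := by
  rw [selbergWeight, selbergG, if_pos ((div_lt_one (by positivity)).mpr hx)]
  ring

lemma sum_range_mul_selbergWeight (M : ℕ) :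
    ∑ k ∈ range (M + 1), k * selbergWeight M k = M * (M + 2) / 6 + M * (M + 1) / (2 * π) := by
  have hN : (0 : ℝ) < M + 1 := by positivity
  have hcot := sum_range_mul_one_sub_div_mul_cot_eq_zero (M + 1)
  push_cast at hcot
  calc ∑ k ∈ range (M + 1), k * selbergWeight M k
      = ∑ k ∈ range (M + 1), ((k * ((M + 1) - k)) / (M + 1) + k / π
          + k * (1 - k / (M + 1)) * cot (π * (k / (M + 1)))) :=
        sum_congr rfl fun k hk => by
          rw [selbergWeight_eq (by exact_mod_cast mem_range.mp hk)]
          field_simp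
    _ = (∑ k ∈ range (M + 1), (k : ℝ) * ((M + 1) - k)) / (M + 1)
          + (∑ k ∈ range (M + 1), (k : ℝ)) / π := by
        rw [sum_add_distrib, sum_add_distrib, hcot, sum_div, sum_div, add_zero]
    _ = M * (M + 2) / 6 + M * (M + 1) / (2 * π) := by
        rw [sum_range_natCast_mul_sub, sum_range_natCast]
        push_cast
        field_simp
        ring

lemma sum_range_mul_one_sub_div_mul_cot_add_two_le {M : ℕ} (hM : 1 ≤ M) :
    ∑ k ∈ range (M - 1),
        k * ((1 - (k + 2 : ℕ) / (M + 1)) * cot (π * ((k + 2 : ℕ) / (M + 1)))) ≤ M / π := by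
  have hN : (0 : ℝ) < M + 1 := by positivity
  have hM' : (1 : ℝ) ≤ M := by exact_mod_cast hM
  set C : ℕ → ℝ := fun j => (1 - j / (M + 1)) * cot (π * (j / (M + 1))) with hC
  have hC0 : C 0 = 0 := by simp [hC, cot_eq_cos_div_sin]
  have hC1 : C 1 ≤ M / π := by
    have hle := cot_le_inv (x := π * (1 / (M + 1))) (by positivity)
      (by rw [mul_one_div]; exact div_lt_self pi_pos (by linarith))
    calc C 1 ≤ (1 - 1 / (M + 1)) * (π * (1 / (M + 1)))⁻¹ := by
          simp only [hC, Nat.cast_one]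
          gcongr
          exact sub_nonneg.mpr ((div_le_one hN).mpr (by linarith))
      _ = M / π := by field_simp; ring
  have hcot := sum_range_sub_two_mul_one_sub_div_mul_cot_nonpos (M + 1)
  push_cast at hcot
  have hsum : ∑ j ∈ range (M + 1), (j - 2) * C j ≤ 0 := by
    simpa only [hC, mul_assoc] using hcot
  rw [sum_range_natCast_mul_add_two C, show M - 1 + 2 = M + 1 by omega]
  linarith

lemma sum_range_mul_selbergWeight_add_two_le {M : ℕ} (hM : 1 ≤ M) :
    ∑ k ∈ range (M - 1), k * selbergWeight M (k + 2) ≤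
      M * (M - 1) * (M - 2) / (6 * (M + 1)) + ((M - 1) * (M - 2) / 2 + M) / π := by
  have hN : (0 : ℝ) < M + 1 := by positivity
  have hshift := sum_range_mul_one_sub_div_mul_cot_add_two_le hM
  push_cast at hshift
  calc ∑ k ∈ range (M - 1), k * selbergWeight M (k + 2)
      = (∑ k ∈ range (M - 1), (k : ℝ) * ((M - 1 : ℕ) - k)) / (M + 1)
          + (∑ k ∈ range (M - 1), (k : ℝ)) / π
          + ∑ k ∈ range (M - 1),
              k * ((1 - (k + 2) / (M + 1)) * cot (π * ((k + 2) / (M + 1)))) := by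
        rw [sum_div, sum_div, ← sum_add_distrib, ← sum_add_distrib]
        refine sum_congr rfl fun k hk => ?_
        have hk : k + 2 ≤ M := by have := mem_range.mp hk; omega
        rw [selbergWeight_eq (by exact_mod_cast (by omega : k + 2 < M + 1))]
        push_cast [hM]
        field_simp
        ring
    _ ≤ (∑ k ∈ range (M - 1), (k : ℝ) * ((M - 1 : ℕ) - k)) / (M + 1)
          + (∑ k ∈ range (M - 1), (k : ℝ)) / π + M / π := by gcongr
    _ = M * (M - 1) * (M - 2) / (6 * (M + 1)) + ((M - 1) * (M - 2) / 2 + M) / π := by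
        rw [sum_range_natCast_mul_sub, sum_range_natCast]
        push_cast [hM]
        field_simp
        ring

lemma selberg_bound_arith {x p : ℝ} (hx : 1 ≤ x) (hp : 0 < p) :
    2 / (x + 1) * (x * (x + 2) / 6 + x * (x + 1) / (2 * p)
      + (x * (x - 1) * (x - 2) / (6 * (x + 1)) + ((x - 1) * (x - 2) / 2 + x) / p))
      ≤ 32 * (1 / 3 + 1 / p) * x / 16 := by
  have hx1 : 0 < x + 1 := by linarith
  have hgap : 32 * (1 / 3 + 1 / p) * x / 16
      - 2 / (x + 1) * (x * (x + 2) / 6 + x * (x + 1) / (2 * p)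
        + (x * (x - 1) * (x - 2) / (6 * (x + 1)) + ((x - 1) * (x - 2) / 2 + x) / p))
      = x * (4 * x - 2) / (3 * (x + 1) ^ 2) + 2 * (x - 1) / ((x + 1) * p) := by
    field_simp
    ring
  have hnonneg : 0 ≤ x * (4 * x - 2) / (3 * (x + 1) ^ 2) + 2 * (x - 1) / ((x + 1) * p) :=
    add_nonneg (div_nonneg (by nlinarith) (by positivity))
      (div_nonneg (by linarith) (by positivity))
  linarith

theorem xi_weighted_sum_bound_general (α β : ℝ)
    (M : ℕ) (hM : 8 ≤ M) :
    ∑ k ∈ Finset.range (M + 1), (k : ℝ) * |selbergXi α β M k| ≤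
      32 * (1 / 3 + 1 / Real.pi) * M / 16 := by
  have hM1 : 1 ≤ M := by omega
  calc ∑ k ∈ range (M + 1), (k : ℝ) * |selbergXi α β M k|
      ≤ 2 / (M + 1) * (∑ k ∈ range (M + 1), k * selbergWeight M k
          + ∑ k ∈ range (M - 1), k * selbergWeight M (k + 2)) :=
        sum_mul_abs_selbergXi_le α β M
    _ ≤ 2 / (M + 1) * (M * (M + 2) / 6 + M * (M + 1) / (2 * π)
          + (M * (M - 1) * (M - 2) / (6 * (M + 1)) + ((M - 1) * (M - 2) / 2 + M) / π)) := by
        rw [sum_range_mul_selbergWeight]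
        gcongr
        exact sum_range_mul_selbergWeight_add_two_le hM1
    _ ≤ 32 * (1 / 3 + 1 / π) * M / 16 := selberg_bound_arith (by exact_mod_cast hM1) pi_pos

/-- For `0 ≤ α ≤ β ≤ π` and `M ≥ 8`: `∑_{k=0}^{M} k·|Ξ_k| ≤ C·M/16`
with `C = 32(1/3 + 1/π)`. -/
theorem xi_weighted_sum_bound (α β : ℝ) (hα : 0 ≤ α) (hαβ : α ≤ β) (hβ : β ≤ Real.pi)
    (M : ℕ) (hM : 8 ≤ M) :
    ∑ k ∈ Finset.range (M + 1), (k : ℝ) * |selbergXi α β M k| ≤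
      32 * (1 / 3 + 1 / Real.pi) * M / 16 :=
  xi_weighted_sum_bound_general α β M hM
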